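/- arXiv:1607.01141 — 4 statements merged into one kernel-verified Lean document; each statement's English description precedes it below -/
import Mathlib

section
/- For every integer t ≥ 4 and every integer m ≥ 1, there are infinitely many primes p such that the projective norm graph P(p,t) contains a copy of the complete bipartite graph K_{t-1,m}. -/
open Polynomial

/-- The projective norm graph on vertex set `L × Kˣ`, where `L/K` is a field extension:
two distinct vertices `(α, a)` and `(β, b)` are adjacent iff `N_{L/K}(α + β) = a * b`. -/
noncomputable def projNormGraph (K L : Type) [Field K] [Field L] [Algebra K L] :
    SimpleGraph (L × Kˣ) :=
  SimpleGraph.fromRel fun v w => Algebra.norm K (v.1 + w.1) = (v.2 : K) * (w.2 : K)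

/-- `G` contains a copy of the complete bipartite graph `K_{s,m}`. -/
def ContainsKst {V : Type} (G : SimpleGraph V) (s m : ℕ) : Prop :=
  ∃ A B : Finset V, Disjoint A B ∧ A.card = s ∧ B.card = m ∧
    ∀ a ∈ A, ∀ b ∈ B, G.Adj a b

/-!
Let `L/K` be an extension of finite fields with `q = |K|` and `n = [L : K] ≥ 2`, and let `g`
generate `Lˣ`. Its conjugates `g ^ q ^ i` (`i < n`) are pairwise distinct and lie outside `K`.
The norm is invariant under the Frobenius `x ↦ x ^ q`, which fixes `K`, so for every `c ∈ K`
`N(g ^ q ^ i + c) = N((g + c) ^ q ^ i) = N(g + c)`: each vertex `(g ^ q ^ i, 1)` is adjacent to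
each vertex `(c, N(g + c))`. This gives a `K_{n,m}` for every `m ≤ q`, hence a `K_{t-1,m}` in
`P(p, t)` for every prime `p > m`.
-/

open Finset Module

namespace FiniteField

variable {K L : Type*} [Field K] [Fintype K] [Field L] [Algebra K L]

theorem frobeniusAlgEquivOfAlgebraic_pow_apply [Algebra.IsAlgebraic K L] (i : ℕ) (x : L) :
    (frobeniusAlgEquivOfAlgebraic K L ^ i) x = x ^ Fintype.card K ^ i := by
  rw [AlgEquiv.coe_pow, coe_frobeniusAlgEquivOfAlgebraic_iterate]

theorem norm_pow_card_pow [Algebra.IsAlgebraic K L] (i : ℕ) (x : L) :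
    Algebra.norm K (x ^ Fintype.card K ^ i) = Algebra.norm K x := by
  rw [← frobeniusAlgEquivOfAlgebraic_pow_apply, Algebra.norm_eq_of_algEquiv]

theorem pow_card_pow_ne_algebraMap [Algebra.IsAlgebraic K L] {x : L}
    (hx : x ∉ Set.range (algebraMap K L)) (i : ℕ) (c : K) :
    x ^ Fintype.card K ^ i ≠ algebraMap K L c := by
  rw [← frobeniusAlgEquivOfAlgebraic_pow_apply,
    ← AlgEquiv.commutes (frobeniusAlgEquivOfAlgebraic K L ^ i)]
  exact fun h => hx ⟨c, ((AlgEquiv.injective _) h).symm⟩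

theorem add_algebraMap_pow_card_pow [Algebra.IsAlgebraic K L] (i : ℕ) (x : L) (c : K) :
    (x + algebraMap K L c) ^ Fintype.card K ^ i = x ^ Fintype.card K ^ i + algebraMap K L c := by
  simp only [← frobeniusAlgEquivOfAlgebraic_pow_apply, map_add, AlgEquiv.commutes]

variable [Fintype L] {g : Lˣ}

theorem orderOf_generator_units (hg : ∀ y, y ∈ Subgroup.zpowers g) :
    orderOf g = Fintype.card L - 1 := by
  rw [orderOf_eq_card_of_forall_mem_zpowers hg, Nat.card_units, Nat.card_eq_fintype_card]

theorem generator_units_notMem_range (hg : ∀ y, y ∈ Subgroup.zpowers g)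
    (hn : 2 ≤ finrank K L) :
    (g : L) ∉ Set.range (algebraMap K L) := by
  rintro ⟨c, hc⟩
  have hq : 2 ≤ Fintype.card K := Fintype.one_lt_card
  have hc0 : c ≠ 0 := by rintro rfl; exact g.ne_zero (by simpa using hc.symm)
  have hpow : g ^ (Fintype.card K - 1) = 1 := Units.ext <| by
    rw [Units.val_pow_eq_pow_val, ← hc, ← map_pow, pow_card_sub_one_eq_one c hc0, map_one,
      Units.val_one]
  have hdvd := orderOf_dvd_of_pow_eq_one hpow
  rw [orderOf_generator_units hg, card_eq_pow_finrank (K := K)] at hdvd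
  have := Nat.le_of_dvd (by omega) hdvd
  have : Fintype.card K ^ 2 ≤ Fintype.card K ^ finrank K L := Nat.pow_le_pow_right (by omega) hn
  have : Fintype.card K * 2 ≤ Fintype.card K ^ 2 := by rw [sq]; exact Nat.mul_le_mul_left _ hq
  omega

theorem injOn_generator_pow_card_pow (hg : ∀ y, y ∈ Subgroup.zpowers g)
    (hn : 2 ≤ finrank K L) :
    Set.InjOn (fun i => (g : L) ^ Fintype.card K ^ i) (Set.Iio (finrank K L)) := by
  set q := Fintype.card K with hq_def
  have hq : 2 ≤ q := Fintype.one_lt_card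
  have hlt : ∀ i < finrank K L, q ^ i < orderOf g := by
    intro i hi
    rw [orderOf_generator_units hg, card_eq_pow_finrank (K := K), ← hq_def]
    have h1 : q ^ i ≤ q ^ (finrank K L - 1) := Nat.pow_le_pow_right (by omega) (by omega)
    have h2 : 2 ≤ q ^ (finrank K L - 1) := le_trans hq (Nat.le_self_pow (by omega) q)
    have h3 : q ^ finrank K L = q ^ (finrank K L - 1) * q := by
      rw [← pow_succ]; congr 1; omega
    have h4 : q ^ (finrank K L - 1) * 2 ≤ q ^ (finrank K L - 1) * q := Nat.mul_le_mul_left _ hq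
    omega
  intro i hi j hj hij
  refine Nat.pow_right_injective hq (pow_injOn_Iio_orderOf (hlt i hi) (hlt j hj) ?_)
  exact Units.ext (by simpa only [Units.val_pow_eq_pow_val] using hij)

end FiniteField

section ProjNormGraph

variable {K L : Type} [Field K] [Fintype K] [Field L] [Finite L] [Algebra K L]

open FiniteField

theorem containsKst_projNormGraph_of_injOn {x : L} (hx : x ∉ Set.range (algebraMap K L))
    {s m : ℕ} (hinj : Set.InjOn (fun i => x ^ Fintype.card K ^ i) (Set.Iio s))
    (hm : m ≤ Fintype.card K) : ContainsKst (projNormGraph K L) s m := by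
  classical
  have hnorm : ∀ c : K, Algebra.norm K (x + algebraMap K L c) ≠ 0 := fun c => by
    rw [Algebra.norm_ne_zero_iff, ← sub_neg_eq_add, sub_ne_zero, ← map_neg]
    simpa using pow_card_pow_ne_algebraMap hx 0 (-c)
  obtain ⟨C, -, hC⟩ := exists_subset_card_eq (s := (univ : Finset K)) (by simpa using hm)
  refine ⟨(range s).image fun i => (x ^ Fintype.card K ^ i, 1),
    C.image fun c => (algebraMap K L c, Units.mk0 _ (hnorm c)), ?_, ?_, ?_, ?_⟩
  · simp only [disjoint_left, mem_image, mem_range, not_exists, not_and]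
    rintro _ ⟨i, -, rfl⟩ c - hc
    exact pow_card_pow_ne_algebraMap hx i c (congrArg Prod.fst hc).symm
  · rw [card_image_of_injOn, card_range]
    intro i hi j hj hij
    exact hinj (by simpa using hi) (by simpa using hj) (congrArg Prod.fst hij)
  · rw [card_image_of_injective _ fun c d hcd =>
      (algebraMap K L).injective (congrArg Prod.fst hcd), hC]
  · simp only [mem_image, mem_range]
    rintro _ ⟨i, -, rfl⟩ _ ⟨c, -, rfl⟩
    rw [projNormGraph, SimpleGraph.fromRel_adj]
    refine ⟨fun h => pow_card_pow_ne_algebraMap hx i c (congrArg Prod.fst h), Or.inl ?_⟩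
    simp only [← add_algebraMap_pow_card_pow, norm_pow_card_pow, Units.val_one, one_mul,
      Units.val_mk0]

theorem containsKst_projNormGraph (hn : 2 ≤ finrank K L) {m : ℕ}
    (hm : m ≤ Fintype.card K) : ContainsKst (projNormGraph K L) (finrank K L) m := by
  have := Fintype.ofFinite L
  obtain ⟨g, hg⟩ := IsCyclic.exists_generator (α := Lˣ)
  exact containsKst_projNormGraph_of_injOn (generator_units_notMem_range hg hn)
    (injOn_generator_pow_card_pow hg hn) hm

end ProjNormGraph

theorem infinitely_many_primes_Kt1m_general (t m : ℕ) (ht : 4 ≤ t) :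
    {p : ℕ | ∃ hp : p.Prime,
      haveI : Fact p.Prime := ⟨hp⟩
      ContainsKst (projNormGraph (ZMod p) (GaloisField p (t - 1))) (t - 1) m}.Infinite := by
  refine (Nat.infinite_setOfPred_prime.sdiff (Set.finite_Iic m)).mono ?_
  rintro p ⟨hp, hpm⟩
  have : Fact p.Prime := ⟨hp⟩
  have hdeg : finrank (ZMod p) (GaloisField p (t - 1)) = t - 1 := GaloisField.finrank p (by omega)
  have hmp : m ≤ Fintype.card (ZMod p) := by
    rw [ZMod.card]
    exact (not_le.mp hpm).le
  refine ⟨hp, ?_⟩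
  simpa only [hdeg] using containsKst_projNormGraph (L := GaloisField p (t - 1)) (by omega) hmp

/-- For every `t ≥ 4` and `m ≥ 1` there are infinitely many primes `p` such that
the projective norm graph `P(p, t)` (on `F_{p^{t-1}} × F_pˣ`) contains a copy of
`K_{t-1, m}`. -/
theorem infinitely_many_primes_Kt1m (t m : ℕ) (ht : 4 ≤ t) (hm : 1 ≤ m) :
    {p : ℕ | ∃ hp : p.Prime,
      haveI : Fact p.Prime := ⟨hp⟩
      ContainsKst (projNormGraph (ZMod p) (GaloisField p (t - 1))) (t - 1) m}.Infinite :=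
  infinitely_many_primes_Kt1m_general t m ht
end

section
/- The projective norm graph P(7,4) contains a copy of the complete bipartite graph K_{4,6}. -/
open Polynomial

instance : Fact (Nat.Prime 7) := ⟨by norm_num⟩

/-! `F_343 = F_7(γ)` with `γ³ = 2`: the cube root exists because `2 ^ (342 / 3) = 8 ^ 38 = 1`,
and `1, γ, γ²` is a basis because `2` is not a cube in `F_7`. In this basis the norm of
`s + tγ + uγ²` is the cubic form `s³ + 2t³ + 4u³ - 6stu`, so `P(7, 4)` is isomorphic to the graph
on `F_7³ × F_7ˣ` defined by that form, and there an explicit `K_{4,6}` is checked by computation. -/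

theorem IsCyclic.exists_pow_eq_of_pow_card_div_eq_one {G : Type*} [CommGroup G] [IsCyclic G]
    [Finite G] {k : ℕ} (hk : k ∣ Nat.card G) {x : G} (hx : x ^ (Nat.card G / k) = 1) :
    ∃ y, y ^ k = x := by
  have hle : (powMonoidHom k : G →* G).range ≤ (powMonoidHom (Nat.card G / k)).ker := by
    rintro _ ⟨y, rfl⟩
    simp only [MonoidHom.mem_ker, powMonoidHom_apply, ← pow_mul, Nat.mul_div_cancel' hk,
      pow_card_eq_one']
  have hcard : (Nat.card G).gcd (Nat.card G / k) = Nat.card G / k :=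
    Nat.gcd_eq_right (Nat.div_dvd_of_dvd hk)
  have heq := Subgroup.eq_of_le_of_card_ge hle (by
    rw [IsCyclic.card_powMonoidHom_range, IsCyclic.card_powMonoidHom_ker, Nat.gcd_eq_right hk,
      hcard])
  exact heq.ge (MonoidHom.mem_ker.mpr hx)

theorem GaloisField.exists_pow_three_eq_two : ∃ γ : GaloisField 7 3, γ ^ 3 = 2 := by
  have h7 : (7 : GaloisField 7 3) = 0 := by exact_mod_cast CharP.cast_eq_zero _ 7
  have h2 : (2 : GaloisField 7 3) ≠ 0 := fun h =>
    one_ne_zero (α := GaloisField 7 3) (by linear_combination 4 * h - h7)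
  have hcard : Nat.card (GaloisField 7 3)ˣ = 342 := by
    rw [Nat.card_units, GaloisField.card 7 3 (by norm_num)]; norm_num
  obtain ⟨y, hy⟩ := IsCyclic.exists_pow_eq_of_pow_card_div_eq_one (x := Units.mk0 2 h2)
    (k := 3) (by rw [hcard]; norm_num) (by
      ext
      rw [hcard, Units.val_pow_eq_pow_val, Units.val_mk0, Units.val_one,
        show 342 / 3 = 3 * 38 by norm_num, pow_mul,
        show (2 : GaloisField 7 3) ^ 3 = 1 by linear_combination h7, one_pow])
  exact ⟨y, by rw [← Units.val_pow_eq_pow_val, hy, Units.val_mk0]⟩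

theorem linearIndependent_pow_of_pow_three_eq {K L : Type*} [Field K] [Field L] [Algebra K L]
    {γ : L} {d : K} (hγ : γ ^ 3 = algebraMap K L d) (hd : ∀ c : K, c ^ 3 ≠ d) :
    LinearIndependent K fun i : Fin 3 => γ ^ (i : ℕ) := by
  have hdeg : (X ^ 3 - C d : K[X]).natDegree = 3 := by compute_degree!
  have hirr : Irreducible (X ^ 3 - C d : K[X]) :=
    irreducible_of_degree_le_three_of_not_isRoot (by simp [hdeg]) fun c hc =>
      hd c (by simpa [sub_eq_zero] using hc)
  have hmin : minpoly K γ = X ^ 3 - C d :=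
    (minpoly.eq_of_irreducible_of_monic hirr (by simp [hγ]) (by monicity!)).symm
  have h := linearIndependent_pow (K := K) γ
  rwa [hmin, hdeg] at h

def pureCubicNorm {R : Type*} [CommRing R] (d : R) (c : Fin 3 → R) : R :=
  c 0 ^ 3 + d * c 1 ^ 3 + d ^ 2 * c 2 ^ 3 - 3 * d * c 0 * c 1 * c 2

theorem Algebra.norm_equivFun_symm_eq_pureCubicNorm {R S : Type*} [CommRing R] [CommRing S]
    [Algebra R S] {γ : S} {d : R} (hγ : γ ^ 3 = algebraMap R S d) (b : Module.Basis (Fin 3) R S)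
    (hb : ⇑b = fun i : Fin 3 => γ ^ (i : ℕ)) (c : Fin 3 → R) :
    Algebra.norm R (b.equivFun.symm c) = pureCubicNorm d c := by
  set M : Matrix (Fin 3) (Fin 3) R :=
    !![c 0, d * c 2, d * c 1; c 1, c 0, d * c 2; c 2, c 1, c 0]
  have hcol (j : Fin 3) : b.equivFun.symm c * b j = b.equivFun.symm fun i => M i j := by
    simp only [Module.Basis.equivFun_symm_apply, Fin.sum_univ_three, hb, Algebra.smul_def]
    fin_cases j <;>
      simp only [M, Fin.isValue, Fin.zero_eta, Fin.mk_one, Fin.reduceFinMk, Fin.val_zero,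
        Fin.val_one, Fin.val_two, pow_zero, pow_one, mul_one, map_mul, Matrix.of_apply,
        Matrix.cons_val', Matrix.cons_val_zero, Matrix.cons_val_one, Matrix.cons_val,
        Matrix.cons_val_fin_one]
    · linear_combination algebraMap R S (c 2) * hγ
    · linear_combination (algebraMap R S (c 1) + algebraMap R S (c 2) * γ) * hγ
  have hmat : Algebra.leftMulMatrix b (b.equivFun.symm c) = M := by
    ext i j
    rw [Algebra.leftMulMatrix_eq_repr_mul, hcol, ← Module.Basis.equivFun_apply,
      LinearEquiv.apply_symm_apply]
  rw [Algebra.norm_eq_matrix_det b, hmat, Matrix.det_fin_three, pureCubicNorm]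
  simp only [M, Fin.isValue, Matrix.of_apply, Matrix.cons_val', Matrix.cons_val_zero,
    Matrix.cons_val_one, Matrix.cons_val, Matrix.cons_val_fin_one]
  ring

namespace SimpleGraph

/-- `projNormGraph K L` is `projFormGraph (Algebra.norm K)` by definition. -/
def projFormGraph {M K : Type*} [Add M] [Monoid K] (f : M → K) : SimpleGraph (M × Kˣ) :=
  SimpleGraph.fromRel fun v w => f (v.1 + w.1) = v.2 * w.2

instance {M K : Type*} [Add M] [Monoid K] [DecidableEq M] [DecidableEq K] (f : M → K) :
    DecidableRel (projFormGraph f).Adj :=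
  fun _ _ => inferInstanceAs (Decidable (_ ∧ _))

def projFormGraph.isoOfAddEquiv {M N K : Type*} [Add M] [Add N] [Monoid K] (e : M ≃+ N)
    {f : N → K} {g : M → K} (hfg : ∀ m, f (e m) = g m) :
    projFormGraph g ≃g projFormGraph f where
  toEquiv := e.toEquiv.prodCongr (Equiv.refl _)
  map_rel_iff' {v w} := by
    simp [projFormGraph, Prod.ext_iff, e.injective.eq_iff, ← hfg]

end SimpleGraph

theorem ContainsKst.map {V W : Type} {G : SimpleGraph V} {H : SimpleGraph W} (f : G ↪g H)
    {s m : ℕ} : ContainsKst G s m → ContainsKst H s m := by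
  rintro ⟨A, B, hAB, hA, hB, hadj⟩
  refine ⟨A.map f.toEmbedding, B.map f.toEmbedding, Finset.disjoint_map _ |>.mpr hAB,
    by simpa using hA, by simpa using hB, ?_⟩
  simp only [Finset.mem_map]
  rintro _ ⟨a, ha, rfl⟩ _ ⟨b, hb, rfl⟩
  exact f.map_rel_iff.mpr (hadj a ha b hb)

theorem containsKst_projFormGraph_pureCubicNorm_two :
    ContainsKst (SimpleGraph.projFormGraph (pureCubicNorm (2 : ZMod 7))) 4 6 := by
  let u (a : ZMod 7) (h : a ≠ 0 := by decide) : (ZMod 7)ˣ := Units.mk0 a h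
  refine ⟨{(![0, 2, 1], u 1), (![0, 1, 4], u 4), (![0, 1, 6], u 2), (![6, 5, 3], u 3)},
    {(![0, 5, 0], u 4), (![1, 5, 0], u 5), (![4, 3, 0], u 2), (![5, 4, 2], u 6),
      (![6, 1, 4], u 6), (![6, 3, 3], u 2)}, ?_⟩
  decide +kernel

/-- The projective norm graph `P(7, 4)` (on `F_{7^3} × F_7ˣ`) contains a copy
of `K_{4,6}`. -/
theorem P74_contains_K46 :
    ContainsKst (projNormGraph (ZMod 7) (GaloisField 7 3)) 4 6 := by
  obtain ⟨γ, hγ⟩ := GaloisField.exists_pow_three_eq_two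
  have hγ' : γ ^ 3 = algebraMap (ZMod 7) _ 2 := by rw [hγ, map_ofNat]
  have hind := linearIndependent_pow_of_pow_three_eq hγ' (by decide)
  let b := basisOfLinearIndependentOfCardEqFinrank hind
    (by rw [Fintype.card_fin, GaloisField.finrank 7 (by norm_num)])
  have e : SimpleGraph.projFormGraph (pureCubicNorm (2 : ZMod 7)) ≃g projNormGraph _ _ :=
    SimpleGraph.projFormGraph.isoOfAddEquiv b.equivFun.symm.toAddEquiv
      (Algebra.norm_equivFun_symm_eq_pureCubicNorm hγ' b
        (coe_basisOfLinearIndependentOfCardEqFinrank hind _))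
  exact containsKst_projFormGraph_pureCubicNorm_two.map e.toEmbedding
end

section
/- Let E be a field of characteristic zero containing a primitive third root of unity ζ and containing a root η of the polynomial g(x) = x³ + 21x² + 3x + 7, and suppose x³ − 2 is irreducible over E. Let F = E(θ) where θ is a root of x³ − 2. Define A := {(0,3), (1,4), (2,5), (θ+1, 6)} ⊆ F × E, and for each root η of g in E define the pair (−((1−η)/4)θ² − ((1+η)/2)θ − 1, (1+3η²)/4), and define B ⊆ F × E to be the set of the three pairs (ζ^k θ² − 1, 1) for 0 ≤ k ≤ 2 together with the pairs associated to the roots η of g lying in E. Then for every (α, u) ∈ A and every (β, v) ∈ B, N_{F/E}(α + β) = u·v. -/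
open Polynomial

/-! In the basis `1, θ, θ²` of `F/E`, multiplication by `a + bθ + cθ²` (with `θ³ = d`) has
matrix `!![a, dc, db; b, a, dc; c, b, a]`, so its norm is `a³ + db³ + d²c³ - 3dabc`.
For `d = 2` each of the eight norm equations becomes a polynomial identity in `E`, which holds
modulo `ζ³ = 1` in the first family and modulo `g(η) = 0` in the second. -/

section PureCubic

variable {E F : Type*} [Field E] [Field F] [Algebra E F] {d : E} {θ : F}

theorem exists_basis_pow_of_irreducible_X_pow_three_sub_C
    (hirr : Irreducible (X ^ 3 - C d : E[X]))
    (hθ : θ ^ 3 = algebraMap E F d) (hgen : IntermediateField.adjoin E {θ} = ⊤) :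
    ∃ B : Module.Basis (Fin 3) E F, ∀ i, B i = θ ^ (i : ℕ) := by
  have hmonic : (X ^ 3 - C d : E[X]).Monic := monic_X_pow_sub_C d (by norm_num)
  have hroot : aeval θ (X ^ 3 - C d : E[X]) = 0 := by simp [hθ]
  have hint : IsIntegral E θ := ⟨_, hmonic, hroot⟩
  have hmin : minpoly E θ = X ^ 3 - C d :=
    (minpoly.eq_of_irreducible_of_monic hirr hroot hmonic).symm
  let pb := PowerBasis.ofAdjoinEqTop hint
    ((IntermediateField.adjoin_simple_eq_top_iff_of_isAlgebraic hint.isAlgebraic).mp hgen)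
  have hdim : pb.dim = 3 := by simp [pb, hmin]
  refine ⟨pb.basis.reindex (finCongr hdim), fun i ↦ ?_⟩
  rw [Module.Basis.reindex_apply, PowerBasis.basis_eq_pow]
  rfl

theorem norm_algebraMap_add_mul_add_mul_sq (hirr : Irreducible (X ^ 3 - C d : E[X]))
    (hθ : θ ^ 3 = algebraMap E F d) (hgen : IntermediateField.adjoin E {θ} = ⊤) (a b c : E) :
    Algebra.norm E (algebraMap E F a + algebraMap E F b * θ + algebraMap E F c * θ ^ 2) =
      a ^ 3 + d * b ^ 3 + d ^ 2 * c ^ 3 - 3 * d * a * b * c := by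
  obtain ⟨B, hB⟩ := exists_basis_pow_of_irreducible_X_pow_three_sub_C hirr hθ hgen
  set x := algebraMap E F a + algebraMap E F b * θ + algebraMap E F c * θ ^ 2
  let M : Matrix (Fin 3) (Fin 3) E := !![a, d * c, d * b; b, a, d * c; c, b, a]
  have hcol : ∀ j, x * B j = ∑ i, M i j • B i := by
    intro j
    fin_cases j <;>
      simp only [x, M, hB, Fin.sum_univ_three, Algebra.smul_def, map_mul, Matrix.of_apply,
        Matrix.cons_val', Matrix.cons_val, Matrix.cons_val_zero, Matrix.cons_val_one,
        Matrix.cons_val_fin_one, Fin.zero_eta, Fin.mk_one, Fin.reduceFinMk, Fin.isValue,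
        Fin.coe_ofNat_eq_mod, Nat.mod_succ, Nat.zero_mod, Nat.one_mod, pow_zero, pow_one, mul_one]
    · linear_combination algebraMap E F c * hθ
    · linear_combination (algebraMap E F b + algebraMap E F c * θ) * hθ
  have hM : Algebra.leftMulMatrix B x = M := by
    ext i j
    rw [Algebra.leftMulMatrix_eq_repr_mul, hcol, B.repr_sum_self]
  rw [Algebra.norm_eq_matrix_det B, hM, Matrix.det_fin_three]
  simp only [M, Matrix.of_apply, Matrix.cons_val', Matrix.cons_val, Matrix.cons_val_zero,
    Matrix.cons_val_one, Matrix.cons_val_fin_one, Fin.isValue]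
  ring

end PureCubic

section CubeRootOfTwo

variable {E F : Type*} [Field E] [Field F] [Algebra E F] {θ : F}
  (hirr : Irreducible (X ^ 3 - C 2 : E[X])) (hθ : θ ^ 3 = 2)
  (hgen : IntermediateField.adjoin E {θ} = ⊤)
include hirr hθ hgen

theorem norm_add_zeta_pair {ω : E} (hω : ω ^ 3 = 1) (s t : E) :
    Algebra.norm E (algebraMap E F s + algebraMap E F t * θ + (algebraMap E F ω * θ ^ 2 - 1)) =
      (s - 1) ^ 3 + 2 * t ^ 3 + 4 - 6 * (s - 1) * t * ω := by
  have h := norm_algebraMap_add_mul_add_mul_sq hirr (by rw [hθ, map_ofNat]) hgen (s - 1) t ω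
  rw [map_sub, map_one] at h
  refine (congrArg (Algebra.norm E) (by ring)).trans (h.trans ?_)
  linear_combination 4 * hω

theorem norm_add_eta_pair [CharZero E] (η s t : E) :
    Algebra.norm E (algebraMap E F s + algebraMap E F t * θ +
        (-(algebraMap E F ((1 - η) / 4)) * θ ^ 2 - algebraMap E F ((1 + η) / 2) * θ - 1)) =
      (s - 1) ^ 3 + 2 * (t - (1 + η) / 2) ^ 3 - (1 - η) ^ 3 / 16 +
        3 / 2 * (s - 1) * (t - (1 + η) / 2) * (1 - η) := by
  have h := norm_algebraMap_add_mul_add_mul_sq hirr (by rw [hθ, map_ofNat]) hgen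
    (s - 1) (t - (1 + η) / 2) (-((1 - η) / 4))
  simp only [map_sub, map_one, map_neg] at h
  refine (congrArg (Algebra.norm E) (by ring)).trans (h.trans ?_)
  ring

end CubeRootOfTwo

theorem K46_norm_equations_general (E F : Type) [Field E] [CharZero E] [Field F] [Algebra E F]
    (ζ : E) (hζ : IsPrimitiveRoot ζ 3)
    (hirr : Irreducible (X ^ 3 - C 2 : E[X]))
    (θ : F) (hθ : θ ^ 3 = 2) (hgen : IntermediateField.adjoin E {θ} = ⊤)
    (A B : Set (F × E))
    (hA : A = {((0 : F), (3 : E)), (1, 4), (2, 5), (θ + 1, 6)})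
    (hB : B = {x | ∃ k : Fin 3, x = (algebraMap E F (ζ ^ (k : ℕ)) * θ ^ 2 - 1, 1)} ∪
      {x | ∃ η : E, η ^ 3 + 21 * η ^ 2 + 3 * η + 7 = 0 ∧
        x = (-(algebraMap E F ((1 - η) / 4)) * θ ^ 2 - algebraMap E F ((1 + η) / 2) * θ - 1,
          (1 + 3 * η ^ 2) / 4)}) :
    ∀ au ∈ A, ∀ bv ∈ B, Algebra.norm E (au.1 + bv.1) = au.2 * bv.2 := by
  subst hA hB
  rintro ⟨α, u⟩ hau ⟨β, v⟩ hbv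
  obtain ⟨s, t, rfl, hstu⟩ : ∃ s t : E, α = algebraMap E F s + algebraMap E F t * θ ∧
      (s, t, u) ∈ ({(0, 0, 3), (1, 0, 4), (2, 0, 5), (1, 1, 6)} : Set (E × E × E)) := by
    simp only [Set.mem_insert_iff, Set.mem_singleton_iff, Prod.mk.injEq] at hau
    rcases hau with ⟨rfl, rfl⟩ | ⟨rfl, rfl⟩ | ⟨rfl, rfl⟩ | ⟨rfl, rfl⟩
    exacts [⟨0, 0, by simp⟩, ⟨1, 0, by simp⟩, ⟨2, 0, by simp [map_ofNat]⟩,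
      ⟨1, 1, by simp [add_comm]⟩]
  simp only [Set.mem_insert_iff, Set.mem_singleton_iff, Prod.mk.injEq] at hstu
  rcases hbv with ⟨k, hk⟩ | ⟨η, hg, hk⟩ <;> obtain ⟨rfl, rfl⟩ := Prod.mk.inj hk
  · have hω : (ζ ^ (k : ℕ)) ^ 3 = 1 := by
      rw [← pow_mul, mul_comm, pow_mul, hζ.pow_eq_one, one_pow]
    rw [norm_add_zeta_pair hirr hθ hgen hω]
    rcases hstu with ⟨rfl, rfl, rfl⟩ | ⟨rfl, rfl, rfl⟩ | ⟨rfl, rfl, rfl⟩ | ⟨rfl, rfl, rfl⟩ <;> ring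
  · rw [norm_add_eta_pair hirr hθ hgen]
    rcases hstu with ⟨rfl, rfl, rfl⟩ | ⟨rfl, rfl, rfl⟩ | ⟨rfl, rfl, rfl⟩ | ⟨rfl, rfl, rfl⟩ <;>
      linear_combination (-3 / 16 : E) * hg

/-- Let `E` be a field of characteristic zero containing a primitive third root of
unity `ζ` and a root of `g(x) = x³ + 21x² + 3x + 7`, over which `x³ - 2` is
irreducible, and let `F = E(θ)` with `θ` a root of `x³ - 2`.  With
`A = {(0,3), (1,4), (2,5), (θ+1,6)}` and `B` consisting of the three pairs
`(ζ^k θ² - 1, 1)` for `0 ≤ k ≤ 2` together with the pairs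
`(-((1-η)/4)θ² - ((1+η)/2)θ - 1, (1+3η²)/4)` for the roots `η` of `g` in `E`,
every `(α, u) ∈ A` and `(β, v) ∈ B` satisfy `N_{F/E}(α + β) = u·v`. -/
theorem K46_norm_equations (E F : Type) [Field E] [CharZero E] [Field F] [Algebra E F]
    (ζ : E) (hζ : IsPrimitiveRoot ζ 3)
    (hη : ∃ η : E, η ^ 3 + 21 * η ^ 2 + 3 * η + 7 = 0)
    (hirr : Irreducible (X ^ 3 - C 2 : E[X]))
    (θ : F) (hθ : θ ^ 3 = 2) (hgen : IntermediateField.adjoin E {θ} = ⊤)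
    (A B : Set (F × E))
    (hA : A = {((0 : F), (3 : E)), (1, 4), (2, 5), (θ + 1, 6)})
    (hB : B = {x | ∃ k : Fin 3, x = (algebraMap E F (ζ ^ (k : ℕ)) * θ ^ 2 - 1, 1)} ∪
      {x | ∃ η : E, η ^ 3 + 21 * η ^ 2 + 3 * η + 7 = 0 ∧
        x = (-(algebraMap E F ((1 - η) / 4)) * θ ^ 2 - algebraMap E F ((1 + η) / 2) * θ - 1,
          (1 + 3 * η ^ 2) / 4)}) :
    ∀ au ∈ A, ∀ bv ∈ B, Algebra.norm E (au.1 + bv.1) = au.2 * bv.2 :=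
  K46_norm_equations_general E F ζ hζ hirr θ hθ hgen A B hA hB
end

section
/- Let K be a field of characteristic zero, let t ≥ 4 be an integer, let θ ∈ K, and let f(x) = x^{t−1} − x + θ ∈ K[x]. Then the derivative f′(x) = (t−1)x^{t−2} − 1 has t−2 distinct roots in an algebraic closure of K, and f takes pairwise distinct values at these t−2 roots. -/
/-!
At a critical point `x` of `f = X ^ (m + 1) - X + θ` we have `(m + 1) x ^ m = 1`, hence
`(m + 1) f(x) = (m + 1) θ - m x`. So `f` restricted to its critical points is an affine function
of `x` with nonzero slope, and in particular injective. The critical points are the roots of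
`(m + 1) X ^ m - 1`, which is separable of degree `m` in characteristic zero.
-/

open Polynomial

section CommRing

variable {R : Type*} [CommRing R] (m : ℕ) (θ : R)

theorem derivative_X_pow_succ_sub_X_add_C :
    derivative (X ^ (m + 1) - X + C θ : R[X]) = C ((m + 1 : ℕ) : R) * X ^ m - 1 := by
  simp

theorem natCast_mul_eval_X_pow_succ_sub_X_add_C_of_isRoot_derivative {x : R}
    (hx : (derivative (X ^ (m + 1) - X + C θ)).IsRoot x) :
    ((m + 1 : ℕ) : R) * eval x (X ^ (m + 1) - X + C θ) = (m + 1 : ℕ) * θ - m * x := by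
  rw [derivative_X_pow_succ_sub_X_add_C, IsRoot.def] at hx
  simp only [eval_sub, eval_mul, eval_C, eval_pow, eval_X, eval_one] at hx
  simp only [eval_add, eval_sub, eval_pow, eval_X, eval_C]
  push_cast at hx ⊢
  linear_combination x * hx

theorem injOn_eval_X_pow_succ_sub_X_add_C [IsDomain R] (hm : (m : R) ≠ 0) :
    Set.InjOn (fun x => eval x (X ^ (m + 1) - X + C θ))
      {x | (derivative (X ^ (m + 1) - X + C θ)).IsRoot x} := by
  intro x hx y hy hxy
  have hx' := natCast_mul_eval_X_pow_succ_sub_X_add_C_of_isRoot_derivative m θ hx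
  have hy' := natCast_mul_eval_X_pow_succ_sub_X_add_C_of_isRoot_derivative m θ hy
  simp only at hxy
  rw [hxy] at hx'
  exact mul_left_cancel₀ hm (by linear_combination hx' - hy')

end CommRing

section Field

variable {F : Type*} [Field F] {c : F}

theorem separable_C_mul_X_pow_sub_one (hc : c ≠ 0) {m : ℕ} (hm : (m : F) ≠ 0) :
    (C c * X ^ m - 1).Separable := by
  have hfactor : C c * X ^ m - 1 = C c * (X ^ m - C c⁻¹) := by
    rw [mul_sub, ← C_mul, mul_inv_cancel₀ hc, C_1]
  rw [hfactor]
  exact Separable.unit_mul (isUnit_C.mpr hc.isUnit) (separable_X_pow_sub_C _ hm (inv_ne_zero hc))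

theorem natDegree_C_mul_X_pow_sub_one (hc : c ≠ 0) (m : ℕ) :
    (C c * X ^ m - 1).natDegree = m := by
  rw [← C_1, natDegree_sub_C, natDegree_C_mul_X_pow _ _ hc]

end Field

/-- For a field `K` of characteristic zero, `t ≥ 4`, `θ ∈ K` and
`f(x) = x^{t-1} - x + θ`, the derivative `f'(x) = (t-1)x^{t-2} - 1` has `t - 2`
distinct roots in an algebraic closure of `K`, and `f` takes pairwise distinct values
at these `t - 2` roots. -/
theorem derivative_distinct_roots_distinct_values (K : Type) [Field K] [CharZero K]
    (t : ℕ) (ht : 4 ≤ t) (θ : K)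
    (f : (AlgebraicClosure K)[X])
    (hf : f = (X ^ (t - 1) - X + C θ : K[X]).map (algebraMap K (AlgebraicClosure K))) :
    (derivative f).roots.Nodup ∧ Multiset.card (derivative f).roots = t - 2 ∧
      Set.InjOn (fun x => f.eval x) {x : AlgebraicClosure K | (derivative f).IsRoot x} := by
  obtain ⟨m, rfl⟩ : ∃ m, t = m + 2 := ⟨t - 2, by omega⟩
  have hf' : f = X ^ (m + 1) - X + C (algebraMap K (AlgebraicClosure K) θ) := by
    rw [hf, show m + 2 - 1 = m + 1 by omega]
    simp
  have hm : (m : AlgebraicClosure K) ≠ 0 := Nat.cast_ne_zero.mpr (by omega)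
  have hc : ((m + 1 : ℕ) : AlgebraicClosure K) ≠ 0 := Nat.cast_ne_zero.mpr m.succ_ne_zero
  subst hf'
  refine ⟨?_, ?_, injOn_eval_X_pow_succ_sub_X_add_C m _ hm⟩
  · rw [derivative_X_pow_succ_sub_X_add_C]
    exact nodup_roots (separable_C_mul_X_pow_sub_one hc hm)
  · rw [derivative_X_pow_succ_sub_X_add_C, IsAlgClosed.card_roots_eq_natDegree,
      natDegree_C_mul_X_pow_sub_one hc]
    rfl
end
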